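/- arXiv:1208.1036 — 2 statements merged into one kernel-verified Lean document; each statement's English description precedes it below -/
import Mathlib

section
/- Let A be an n×n nonnegative real matrix with r(A) > 0, let C and D be real diagonal n×n matrices, and let t ∈ [0,1]. Then log r(e^{(1−t)C + tD} A) ≤ (1−t)·log r(e^{C} A) + t·log r(e^{D} A). -/
open Matrix

/-- Spectral radius of a real square matrix: the maximum modulus of its complex
eigenvalues. -/
noncomputable def specRad {n : ℕ} (A : Matrix (Fin n) (Fin n) ℝ) : ℝ :=
  sSup {x : ℝ | ∃ μ ∈ spectrum ℂ (A.map Complex.ofReal), x = ‖μ‖}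

/-- A nonnegative matrix is irreducible if for every pair (i,j) some power has a
positive (i,j) entry. -/
def MatIrred {n : ℕ} (A : Matrix (Fin n) (Fin n) ℝ) : Prop :=
  ∀ i j : Fin n, ∃ m : ℕ, 0 < m ∧ 0 < (A ^ m) i j

/-- For a real diagonal matrix D = diag d, `expDiag d` is diag (exp d). -/
noncomputable def expDiag {n : ℕ} (d : Fin n → ℝ) : Matrix (Fin n) (Fin n) ℝ :=
  Matrix.diagonal fun i => Real.exp (d i)

/-- Property 1: equality in the log-convexity inequality forces C - D to be scalar. -/
def Property1 {n : ℕ} (A : Matrix (Fin n) (Fin n) ℝ) : Prop :=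
  ∀ C D : Fin n → ℝ, ∀ t ∈ Set.Ioo (0:ℝ) 1,
    Real.log (specRad (expDiag (fun i => (1 - t) * C i + t * D i) * A)) =
      (1 - t) * Real.log (specRad (expDiag C * A)) +
        t * Real.log (specRad (expDiag D * A)) →
    ∃ c : ℝ, ∀ i, C i - D i = c


/-!
The entries of `e^{(1-t)C+tD} A` are the weighted geometric means
`(e^C A)ᵢⱼ^(1-t) (e^D A)ᵢⱼ^t`. By Hölder's inequality an entrywise weighted geometric mean of
nonnegative matrices is dominated, entrywise and in the `ℓ^∞` operator norm, by the corresponding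
mean of products, hence of powers: `‖Gᵏ‖ ≤ ‖Pᵏ‖^(1-t) ‖Qᵏ‖^t`. Gelfand's formula
`r(B) = lim ‖Bᵏ‖^(1/k)` turns this into `r(e^{(1-t)C+tD} A) ≤ r(e^C A)^(1-t) r(e^D A)^t`, and
taking logarithms gives the claim. The logarithms are finite: for `C = E`, `D = -E`, `t = 1/2`
the same inequality reads `r(A) ≤ r(e^E A)^(1/2) r(e^{-E} A)^(1/2)`, so `r(e^E A) > 0`.
-/

open Filter Topology

theorem Real.sum_rpow_mul_rpow_le {ι : Type*} (s : Finset ι) {t : ℝ} (ht0 : 0 ≤ t) (ht1 : t ≤ 1)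
    {a b : ι → ℝ} (ha : ∀ i ∈ s, 0 ≤ a i) (hb : ∀ i ∈ s, 0 ≤ b i) :
    ∑ i ∈ s, a i ^ (1 - t) * b i ^ t ≤ (∑ i ∈ s, a i) ^ (1 - t) * (∑ i ∈ s, b i) ^ t := by
  rcases ht0.eq_or_lt with rfl | ht0
  · simp
  rcases ht1.eq_or_lt with rfl | ht1
  · simp
  have h1t : 0 < 1 - t := sub_pos.2 ht1
  have key := Real.inner_le_Lp_mul_Lq_of_nonneg s (.one_sub_inv_inv ht0 ht1)
    (fun i hi => Real.rpow_nonneg (ha i hi) (1 - t)) (fun i hi => Real.rpow_nonneg (hb i hi) t)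
  have hsum {c : ι → ℝ} (hc : ∀ i ∈ s, 0 ≤ c i) {p : ℝ} (hp : 0 < p) :
      ∑ i ∈ s, (c i ^ p) ^ p⁻¹ = ∑ i ∈ s, c i :=
    Finset.sum_congr rfl fun i hi => Real.rpow_rpow_inv (hc i hi) hp.ne'
  rwa [hsum ha h1t, hsum hb ht0, one_div, one_div, inv_inv, inv_inv] at key

namespace Matrix

variable {l m n : Type*} {t : ℝ}

noncomputable def geomMean (t : ℝ) (P Q : Matrix l m ℝ) : Matrix l m ℝ :=
  of fun i j => P i j ^ (1 - t) * Q i j ^ t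

@[simp]
theorem geomMean_apply (P Q : Matrix l m ℝ) (i : l) (j : m) :
    geomMean t P Q i j = P i j ^ (1 - t) * Q i j ^ t :=
  rfl

theorem geomMean_nonneg {P Q : Matrix l m ℝ} (hP : ∀ i j, 0 ≤ P i j) (hQ : ∀ i j, 0 ≤ Q i j)
    (i : l) (j : m) : 0 ≤ geomMean t P Q i j :=
  mul_nonneg (Real.rpow_nonneg (hP i j) _) (Real.rpow_nonneg (hQ i j) _)

theorem geomMean_mul_geomMean_apply_le [Fintype m] (ht0 : 0 ≤ t) (ht1 : t ≤ 1)
    {P Q : Matrix l m ℝ} {P' Q' : Matrix m n ℝ} (hP : ∀ i j, 0 ≤ P i j) (hQ : ∀ i j, 0 ≤ Q i j)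
    (hP' : ∀ i j, 0 ≤ P' i j) (hQ' : ∀ i j, 0 ≤ Q' i j) (i : l) (j : n) :
    (geomMean t P Q * geomMean t P' Q') i j ≤ geomMean t (P * P') (Q * Q') i j := by
  calc (geomMean t P Q * geomMean t P' Q') i j
      = ∑ k, (P i k * P' k j) ^ (1 - t) * (Q i k * Q' k j) ^ t := by
        simp only [mul_apply, geomMean_apply]
        refine Finset.sum_congr rfl fun k _ => ?_
        rw [Real.mul_rpow (hP i k) (hP' k j), Real.mul_rpow (hQ i k) (hQ' k j)]
        ring
    _ ≤ geomMean t (P * P') (Q * Q') i j :=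
        Real.sum_rpow_mul_rpow_le _ ht0 ht1 (fun k _ => mul_nonneg (hP i k) (hP' k j))
          (fun k _ => mul_nonneg (hQ i k) (hQ' k j))

theorem geomMean_pow_apply_le [Fintype m] [DecidableEq m] (ht0 : 0 ≤ t) (ht1 : t ≤ 1)
    {P Q : Matrix m m ℝ} (hP : ∀ i j, 0 ≤ P i j) (hQ : ∀ i j, 0 ≤ Q i j) (k : ℕ) (i j : m) :
    (geomMean t P Q ^ k) i j ≤ geomMean t (P ^ k) (Q ^ k) i j := by
  induction k generalizing i j with
  | zero =>
    rw [pow_zero, pow_zero, pow_zero]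
    by_cases h : i = j
    · subst h; simp
    · simp only [one_apply_ne h, geomMean_apply]
      positivity
  | succ k ih =>
    calc (geomMean t P Q ^ (k + 1)) i j
        ≤ (geomMean t (P ^ k) (Q ^ k) * geomMean t P Q) i j := by
          rw [pow_succ]
          exact Finset.sum_le_sum fun l _ =>
            mul_le_mul_of_nonneg_right (ih i l) (geomMean_nonneg hP hQ l j)
      _ ≤ geomMean t (P ^ (k + 1)) (Q ^ (k + 1)) i j := by
          rw [pow_succ, pow_succ]
          exact geomMean_mul_geomMean_apply_le ht0 ht1 (pow_apply_nonneg hP k)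
            (pow_apply_nonneg hQ k) hP hQ i j

end Matrix

section LinftyNorm

attribute [local instance] Matrix.linftyOpSeminormedAddCommGroup Matrix.linftyOpNormedRing
  Matrix.linftyOpNormedAlgebra

namespace Matrix

variable {m n : Type*} [Fintype m] [Fintype n]

theorem sum_norm_apply_le_linfty_opNorm {α : Type*} [SeminormedAddCommGroup α]
    (R : Matrix m n α) (i : m) : ∑ j, ‖R i j‖ ≤ ‖R‖ := by
  rw [linfty_opNorm_def]
  refine le_trans (le_of_eq ?_) (NNReal.coe_le_coe.2
    (Finset.le_sup (f := fun i => ∑ j, ‖R i j‖₊) (Finset.mem_univ i)))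
  simp

theorem linfty_opNorm_le_of_sum_norm_le {α : Type*} [SeminormedAddCommGroup α]
    {R : Matrix m n α} {c : ℝ} (hc : 0 ≤ c) (h : ∀ i, ∑ j, ‖R i j‖ ≤ c) : ‖R‖ ≤ c := by
  lift c to NNReal using hc
  rw [linfty_opNorm_def, NNReal.coe_le_coe]
  exact Finset.sup_le fun i _ => by simpa [← NNReal.coe_le_coe] using h i

theorem linfty_opNorm_map_ofReal (R : Matrix m n ℝ) : ‖R.map Complex.ofReal‖ = ‖R‖ := by
  simp [linfty_opNorm_def]

theorem linfty_opNorm_le_rpow_mul_rpow {t : ℝ} (ht0 : 0 ≤ t) (ht1 : t ≤ 1)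
    {P Q R : Matrix m n ℝ} (hP : ∀ i j, 0 ≤ P i j) (hQ : ∀ i j, 0 ≤ Q i j)
    (hR : ∀ i j, ‖R i j‖ ≤ geomMean t P Q i j) : ‖R‖ ≤ ‖P‖ ^ (1 - t) * ‖Q‖ ^ t := by
  have sum_le_norm {S : Matrix m n ℝ} (hS : ∀ i j, 0 ≤ S i j) (i : m) : ∑ j, S i j ≤ ‖S‖ := by
    simpa only [Real.norm_of_nonneg (hS i _)] using sum_norm_apply_le_linfty_opNorm S i
  refine linfty_opNorm_le_of_sum_norm_le (by positivity) fun i => ?_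
  calc ∑ j, ‖R i j‖ ≤ ∑ j, P i j ^ (1 - t) * Q i j ^ t := Finset.sum_le_sum fun j _ => hR i j
    _ ≤ (∑ j, P i j) ^ (1 - t) * (∑ j, Q i j) ^ t :=
        Real.sum_rpow_mul_rpow_le _ ht0 ht1 (fun j _ => hP i j) (fun j _ => hQ i j)
    _ ≤ ‖P‖ ^ (1 - t) * ‖Q‖ ^ t := by
        have hP_sum : 0 ≤ ∑ j, P i j := Finset.sum_nonneg fun j _ => hP i j
        have hQ_sum : 0 ≤ ∑ j, Q i j := Finset.sum_nonneg fun j _ => hQ i j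
        exact mul_le_mul (Real.rpow_le_rpow hP_sum (sum_le_norm hP i) (by linarith))
          (Real.rpow_le_rpow hQ_sum (sum_le_norm hQ i) ht0) (Real.rpow_nonneg hQ_sum t)
          (by positivity)

end Matrix

variable {n : ℕ}

theorem specRad_nonneg (B : Matrix (Fin n) (Fin n) ℝ) : 0 ≤ specRad B :=
  Real.sSup_nonneg (by rintro _ ⟨μ, -, rfl⟩; exact norm_nonneg μ)

theorem specRad_fin_zero (B : Matrix (Fin 0) (Fin 0) ℝ) : specRad B = 0 := by
  simp [specRad, spectrum.of_subsingleton]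

theorem specRad_eq_toReal_spectralRadius [NeZero n] (B : Matrix (Fin n) (Fin n) ℝ) :
    specRad B = (spectralRadius ℂ (B.map Complex.ofReal)).toReal := by
  obtain ⟨μ, hμ, hμr⟩ := spectrum.exists_nnnorm_eq_spectralRadius_of_nonempty
    (spectrum.nonempty_of_isAlgClosed_of_finiteDimensional ℂ (B.map Complex.ofReal))
  have hμ_greatest :
      IsGreatest {x : ℝ | ∃ ν ∈ spectrum ℂ (B.map Complex.ofReal), x = ‖ν‖} ‖μ‖ := by
    refine ⟨⟨μ, hμ, rfl⟩, ?_⟩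
    rintro _ ⟨ν, hν, rfl⟩
    have : (‖ν‖₊ : ENNReal) ≤ ‖μ‖₊ := hμr ▸ le_iSup₂ (f := fun k _ => (‖k‖₊ : ENNReal)) ν hν
    exact_mod_cast this
  rw [specRad, hμ_greatest.csSup_eq, ← hμr]
  rfl

theorem tendsto_norm_pow_rpow_specRad [NeZero n] (B : Matrix (Fin n) (Fin n) ℝ) :
    Tendsto (fun k : ℕ => ‖B ^ k‖ ^ (1 / k : ℝ)) atTop (𝓝 (specRad B)) := by
  have : CompleteSpace (Matrix (Fin n) (Fin n) ℂ) := FiniteDimensional.complete ℂ _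
  have hfin : spectralRadius ℂ (B.map Complex.ofReal) ≠ ⊤ :=
    ((spectrum.spectralRadius_le_nnnorm _).trans_lt ENNReal.coe_lt_top).ne
  rw [specRad_eq_toReal_spectralRadius]
  refine ((ENNReal.tendsto_toReal hfin).comp
    (spectrum.pow_norm_pow_one_div_tendsto_nhds_spectralRadius _)).congr fun k => ?_
  rw [Function.comp_apply, ENNReal.toReal_ofReal (by positivity),
    ← Matrix.linfty_opNorm_map_ofReal (B ^ k)]
  congr 2
  exact (B.map_pow Complex.ofRealHom k).symm

theorem specRad_geomMean_le [NeZero n] {t : ℝ} (ht0 : 0 ≤ t) (ht1 : t ≤ 1)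
    {P Q : Matrix (Fin n) (Fin n) ℝ} (hP : ∀ i j, 0 ≤ P i j) (hQ : ∀ i j, 0 ≤ Q i j) :
    specRad (Matrix.geomMean t P Q) ≤ specRad P ^ (1 - t) * specRad Q ^ t := by
  refine le_of_tendsto_of_tendsto (tendsto_norm_pow_rpow_specRad _)
    (((tendsto_norm_pow_rpow_specRad P).rpow_const (.inr (by linarith))).mul
      ((tendsto_norm_pow_rpow_specRad Q).rpow_const (.inr ht0))) (Eventually.of_forall fun k => ?_)
  have hk : ‖Matrix.geomMean t P Q ^ k‖ ≤ ‖P ^ k‖ ^ (1 - t) * ‖Q ^ k‖ ^ t :=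
    Matrix.linfty_opNorm_le_rpow_mul_rpow ht0 ht1 (Matrix.pow_apply_nonneg hP k)
      (Matrix.pow_apply_nonneg hQ k) fun i j => by
        rw [Real.norm_of_nonneg (Matrix.pow_apply_nonneg (Matrix.geomMean_nonneg hP hQ) k i j)]
        exact Matrix.geomMean_pow_apply_le ht0 ht1 hP hQ k i j
  calc ‖Matrix.geomMean t P Q ^ k‖ ^ (1 / k : ℝ)
      ≤ (‖P ^ k‖ ^ (1 - t) * ‖Q ^ k‖ ^ t) ^ (1 / k : ℝ) := by gcongr
    _ = (‖P ^ k‖ ^ (1 / k : ℝ)) ^ (1 - t) * (‖Q ^ k‖ ^ (1 / k : ℝ)) ^ t := by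
        rw [Real.mul_rpow (by positivity) (by positivity), ← Real.rpow_mul (norm_nonneg _),
          ← Real.rpow_mul (norm_nonneg _), ← Real.rpow_mul (norm_nonneg _),
          ← Real.rpow_mul (norm_nonneg _), mul_comm (1 - t), mul_comm t]

end LinftyNorm

section ExpDiag

variable {n : ℕ} {A : Matrix (Fin n) (Fin n) ℝ}

theorem expDiag_mul_apply (E : Fin n → ℝ) (A : Matrix (Fin n) (Fin n) ℝ) (i j : Fin n) :
    (expDiag E * A) i j = Real.exp (E i) * A i j :=
  Matrix.diagonal_mul _ _ _ _

theorem expDiag_mul_nonneg (hA : ∀ i j, 0 ≤ A i j) (E : Fin n → ℝ) (i j : Fin n) :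
    0 ≤ (expDiag E * A) i j := by
  rw [expDiag_mul_apply]
  exact mul_nonneg (Real.exp_pos _).le (hA i j)

theorem expDiag_convexComb_mul_eq_geomMean (hA : ∀ i j, 0 ≤ A i j) (C D : Fin n → ℝ) (t : ℝ) :
    expDiag (fun i => (1 - t) * C i + t * D i) * A =
      Matrix.geomMean t (expDiag C * A) (expDiag D * A) := by
  ext i j
  rw [Matrix.geomMean_apply, expDiag_mul_apply, expDiag_mul_apply, expDiag_mul_apply,
    Real.mul_rpow (Real.exp_pos _).le (hA i j), Real.mul_rpow (Real.exp_pos _).le (hA i j),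
    ← Real.exp_mul, ← Real.exp_mul]
  calc Real.exp ((1 - t) * C i + t * D i) * A i j
      = Real.exp (C i * (1 - t) + D i * t) * A i j ^ ((1 - t) + t) := by
        rw [sub_add_cancel, Real.rpow_one]
        ring_nf
    _ = _ := by
        rw [Real.rpow_add' (hA i j) (by norm_num), Real.exp_add]
        ring

theorem specRad_expDiag_convexComb_mul_le [NeZero n] (hA : ∀ i j, 0 ≤ A i j) (C D : Fin n → ℝ)
    {t : ℝ} (ht0 : 0 ≤ t) (ht1 : t ≤ 1) :
    specRad (expDiag (fun i => (1 - t) * C i + t * D i) * A) ≤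
      specRad (expDiag C * A) ^ (1 - t) * specRad (expDiag D * A) ^ t := by
  rw [expDiag_convexComb_mul_eq_geomMean hA]
  exact specRad_geomMean_le ht0 ht1 (expDiag_mul_nonneg hA C) (expDiag_mul_nonneg hA D)

theorem specRad_expDiag_mul_pos [NeZero n] (hA : ∀ i j, 0 ≤ A i j) (hr : 0 < specRad A)
    (E : Fin n → ℝ) : 0 < specRad (expDiag E * A) := by
  have h := specRad_expDiag_convexComb_mul_le hA E (-E) (t := 1 / 2) (by norm_num) (by norm_num)
  have hA_eq : expDiag (fun i => (1 - 1 / 2) * E i + 1 / 2 * (-E) i) * A = A := by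
    ext i j
    rw [expDiag_mul_apply, Pi.neg_apply, show (1 - 1 / 2) * E i + 1 / 2 * -E i = 0 by ring,
      Real.exp_zero, one_mul]
  refine (specRad_nonneg _).lt_of_ne' fun h_zero => ?_
  rw [hA_eq, h_zero, Real.zero_rpow (by norm_num), zero_mul] at h
  exact hr.not_ge h

end ExpDiag

theorem stmt0 {n : ℕ} (A : Matrix (Fin n) (Fin n) ℝ)
    (hA : ∀ i j, 0 ≤ A i j) (hr : 0 < specRad A)
    (C D : Fin n → ℝ) (t : ℝ) (ht : t ∈ Set.Icc (0:ℝ) 1) :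
    Real.log (specRad (expDiag (fun i => (1 - t) * C i + t * D i) * A)) ≤
      (1 - t) * Real.log (specRad (expDiag C * A)) +
        t * Real.log (specRad (expDiag D * A)) := by
  obtain ⟨ht0, ht1⟩ := ht
  have : NeZero n := ⟨by rintro rfl; exact hr.ne' (specRad_fin_zero A)⟩
  have hC := specRad_expDiag_mul_pos hA hr C
  have hD := specRad_expDiag_mul_pos hA hr D
  calc Real.log (specRad (expDiag (fun i => (1 - t) * C i + t * D i) * A))
      ≤ Real.log (specRad (expDiag C * A) ^ (1 - t) * specRad (expDiag D * A) ^ t) :=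
        Real.log_le_log (specRad_expDiag_mul_pos hA hr _)
          (specRad_expDiag_convexComb_mul_le hA C D ht0 ht1)
    _ = (1 - t) * Real.log (specRad (expDiag C * A)) + t * Real.log (specRad (expDiag D * A)) := by
        rw [Real.log_mul (by positivity) (by positivity), Real.log_rpow hC, Real.log_rpow hD]
end

section
/- Let A be an n×n nonnegative real matrix with r(A) > 0 that is not irreducible (i.e. reducible). Then A does not have Property 1: there exist real diagonal matrices C and D such that C − D ≠ c·I for every real c, and yet log r(e^{(1−t)C + tD} A) = (1−t)·log r(e^{C} A) + t·log r(e^{D} A) for every t ∈ (0,1). -/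
open Matrix

/-!
If `A` is reducible, some nonempty proper index set is closed under the edges of `A`, so `A` is
block triangular and the spectrum of `diag(e^w) A`, for `w` equal to `a` on one block and `b` on the
other, is the union of the two block spectra rescaled by `e^a` and `e^b`; hence
`r(diag(e^w) A) = max (e^a r₁) (e^b r₂)`. Taking `C = 0` and damping only the block of smaller
spectral radius in `D`, the spectral radius stays equal to `r(A)` along the whole segment from
`C` to `D`, so `log r` is affine there although `C - D` is not scalar.
-/

section Spectrum

variable {ι K : Type*} [Fintype ι] [DecidableEq ι] [Field K]

theorem spectrum_eq_union_of_twoBlockTriangular (M : Matrix ι ι K) (p : ι → Prop)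
    [DecidablePred p] (h : ∀ i, ¬p i → ∀ j, p j → M i j = 0) :
    spectrum K M = spectrum K (M.toSquareBlockProp p) ∪
      spectrum K (M.toSquareBlockProp fun i => ¬p i) := by
  have block_sub (q : ι → Prop) [DecidablePred q] (μ : K) :
      (algebraMap K (Matrix ι ι K) μ - M).toSquareBlockProp q =
        algebraMap K (Matrix {i // q i} {i // q i} K) μ - M.toSquareBlockProp q := by
    ext i j
    simp [toSquareBlockProp_def, algebraMap_matrix_apply, Subtype.ext_iff]
  ext μ
  simp only [Set.mem_union, spectrum.mem_iff, isUnit_iff_isUnit_det, isUnit_iff_ne_zero,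
    not_not, ← block_sub]
  have hμ : ∀ i, ¬p i → ∀ j, p j → (algebraMap K (Matrix ι ι K) μ - M) i j = 0 :=
    fun i hi j hj => by
      simp [h i hi j hj, algebraMap_matrix_apply, show i ≠ j from fun hij => hi (hij ▸ hj)]
  rw [twoBlockTriangular_det _ p hμ, mul_eq_zero]

end Spectrum

section SpectralRadius

variable {ι : Type*} [Fintype ι] [DecidableEq ι]

noncomputable def cplxSpecRad (M : Matrix ι ι ℂ) : ℝ :=
  sSup ((‖·‖) '' spectrum ℂ M)

theorem specRad_eq_cplxSpecRad {n : ℕ} (A : Matrix (Fin n) (Fin n) ℝ) :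
    specRad A = cplxSpecRad (A.map Complex.ofReal) := by
  simp only [specRad, cplxSpecRad, Set.image, eq_comm]

theorem cplxSpecRad_nonneg (M : Matrix ι ι ℂ) : 0 ≤ cplxSpecRad M :=
  Real.sSup_nonneg <| by rintro _ ⟨μ, -, rfl⟩; exact norm_nonneg μ

theorem cplxSpecRad_zero : cplxSpecRad (0 : Matrix ι ι ℂ) = 0 := by
  refine le_antisymm (Real.sSup_nonpos ?_) (cplxSpecRad_nonneg 0)
  rintro _ ⟨μ, hμ, rfl⟩
  by_contra hne
  refine hμ ?_
  simpa [spectrum.mem_resolventSet_iff] using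
    (norm_pos_iff.1 (not_le.1 hne)).isUnit.map (algebraMap ℂ (Matrix ι ι ℂ))

open scoped Pointwise in
theorem cplxSpecRad_smul (M : Matrix ι ι ℂ) {c : ℂ} (hc : c ≠ 0) :
    cplxSpecRad (c • M) = ‖c‖ * cplxSpecRad M := by
  have hnorm : (‖·‖) '' spectrum ℂ (c • M) = ‖c‖ • ((‖·‖) '' spectrum ℂ M) := by
    rw [← Units.val_mk0 hc, ← Units.smul_def, spectrum.unit_smul_eq_smul, ← Set.image_smul,
      ← Set.image_smul, Set.image_image, Set.image_image]
    simp [Units.smul_def]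
  rw [cplxSpecRad, hnorm, Real.sSup_smul_of_nonneg (norm_nonneg c), smul_eq_mul, cplxSpecRad]

theorem cplxSpecRad_eq_max_of_twoBlockTriangular (M : Matrix ι ι ℂ) (p : ι → Prop)
    [DecidablePred p] [Nonempty {i // p i}] [Nonempty {i // ¬p i}]
    (h : ∀ i, ¬p i → ∀ j, p j → M i j = 0) :
    cplxSpecRad M = max (cplxSpecRad (M.toSquareBlockProp p))
      (cplxSpecRad (M.toSquareBlockProp fun i => ¬p i)) := by
  rw [cplxSpecRad, spectrum_eq_union_of_twoBlockTriangular M p h, Set.image_union,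
    csSup_union (((finite_spectrum _).image _).bddAbove)
      ((spectrum.nonempty_of_isAlgClosed_of_finiteDimensional ℂ _).image _)
      (((finite_spectrum _).image _).bddAbove)
      ((spectrum.nonempty_of_isAlgClosed_of_finiteDimensional ℂ _).image _),
    cplxSpecRad, cplxSpecRad]

end SpectralRadius

theorem specRad_expDiag_ite_mul_eq_max {n : ℕ} (A : Matrix (Fin n) (Fin n) ℝ)
    (p : Fin n → Prop) [DecidablePred p] [Nonempty {i // p i}] [Nonempty {i // ¬p i}]
    (h : ∀ i, ¬p i → ∀ j, p j → A i j = 0) (a b : ℝ) :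
    specRad (expDiag (fun i => if p i then a else b) * A) =
      max (Real.exp a * cplxSpecRad ((A.map Complex.ofReal).toSquareBlockProp p))
        (Real.exp b * cplxSpecRad ((A.map Complex.ofReal).toSquareBlockProp fun i => ¬p i)) := by
  set M := (expDiag (fun i => if p i then a else b) * A).map Complex.ofReal
  have hM : ∀ i j, M i j = Real.exp (if p i then a else b) * A i j := by
    simp [M, expDiag, diagonal_mul]
  have hblock : ∀ i, ¬p i → ∀ j, p j → M i j = 0 := fun i hi j hj => by
    simp [hM, h i hi j hj]
  have hp : M.toSquareBlockProp p =
      (Real.exp a : ℂ) • (A.map Complex.ofReal).toSquareBlockProp p := by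
    ext i j; simp [toSquareBlockProp_def, hM, i.2]
  have hnp : M.toSquareBlockProp (fun i => ¬p i) =
      (Real.exp b : ℂ) • (A.map Complex.ofReal).toSquareBlockProp fun i => ¬p i := by
    ext i j; simp [toSquareBlockProp_def, hM, i.2]
  rw [specRad_eq_cplxSpecRad, cplxSpecRad_eq_max_of_twoBlockTriangular M p hblock, hp, hnp,
    cplxSpecRad_smul _ (by exact_mod_cast (Real.exp_pos a).ne'),
    cplxSpecRad_smul _ (by exact_mod_cast (Real.exp_pos b).ne'),
    Complex.norm_of_nonneg (Real.exp_pos a).le, Complex.norm_of_nonneg (Real.exp_pos b).le]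

theorem exists_max_exp_mul_eq_max {x y : ℝ} (hx : 0 ≤ x) (hy : 0 ≤ y) :
    ∃ c d : ℝ, c ≠ d ∧ ∀ t, 0 ≤ t →
      max (Real.exp (t * c) * x) (Real.exp (t * d) * y) = max x y := by
  wlog hyx : y ≤ x generalizing x y
  · obtain ⟨c, d, hcd, h⟩ := this hy hx (le_of_not_ge hyx)
    exact ⟨d, c, hcd.symm, fun t ht => by rw [max_comm, h t ht, max_comm]⟩
  refine ⟨0, -1, by norm_num, fun t ht => ?_⟩
  have hdecay : Real.exp (t * -1) * y ≤ x :=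
    calc Real.exp (t * -1) * y ≤ 1 * y :=
          mul_le_mul_of_nonneg_right (Real.exp_le_one_iff.2 (by linarith)) hy
      _ ≤ x := by rwa [one_mul]
  rw [mul_zero, Real.exp_zero, one_mul, max_eq_left hdecay, max_eq_left hyx]

theorem pow_succ_apply_pos {ι : Type*} [Fintype ι] [DecidableEq ι] {A : Matrix ι ι ℝ}
    (hA : ∀ i j, 0 ≤ A i j) {m : ℕ} {i k l : ι} (hik : 0 < (A ^ m) i k) (hkl : 0 < A k l) :
    0 < (A ^ (m + 1)) i l := by
  rw [pow_succ, mul_apply]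
  exact lt_of_lt_of_le (mul_pos hik hkl)
    (Finset.single_le_sum (f := fun x => (A ^ m) i x * A x l)
      (fun x _ => mul_nonneg (pow_apply_nonneg hA m i x) (hA x l)) (Finset.mem_univ k))

theorem exists_twoBlockTriangular_of_not_matIrred {n : ℕ} {A : Matrix (Fin n) (Fin n) ℝ}
    (hA : ∀ i j, 0 ≤ A i j) (hA0 : A ≠ 0) (hred : ¬MatIrred A) :
    ∃ p : Fin n → Prop, (∃ i, p i) ∧ (∃ i, ¬p i) ∧ ∀ i, ¬p i → ∀ j, p j → A i j = 0 := by
  simp only [MatIrred, not_forall, not_exists, not_and, not_lt] at hred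
  obtain ⟨i, j, hij⟩ := hred
  by_cases hreach : ∃ k, ∃ m, 0 < m ∧ 0 < (A ^ m) i k
  · obtain ⟨k, hk⟩ := hreach
    refine ⟨fun l => ¬∃ m, 0 < m ∧ 0 < (A ^ m) i l,
      ⟨j, fun ⟨m, hm, hpos⟩ => (hij m hm).not_gt hpos⟩, ⟨k, not_not.2 hk⟩, fun k hk l hl => ?_⟩
    obtain ⟨m, -, hpos⟩ := not_not.1 hk
    by_contra hne
    exact hl ⟨m + 1, m.succ_pos, pow_succ_apply_pos hA hpos ((hA k l).lt_of_ne' hne)⟩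
  · have hrow : ∀ l, A i l = 0 := fun l =>
      ((hA i l).eq_or_lt.resolve_right fun hpos => hreach ⟨l, 1, one_pos, by rwa [pow_one]⟩).symm
    refine ⟨(· ≠ i), ?_, ⟨i, not_not.2 rfl⟩, fun k hk l _ => not_not.1 hk ▸ hrow l⟩
    by_contra! hall
    exact hA0 (Matrix.ext fun k l => by rw [hall k, hrow l, Matrix.zero_apply])

theorem exists_specRad_expDiag_smul_mul_eq {n : ℕ} (A : Matrix (Fin n) (Fin n) ℝ)
    (p : Fin n → Prop) [DecidablePred p] [Nonempty {i // p i}] [Nonempty {i // ¬p i}]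
    (h : ∀ i, ¬p i → ∀ j, p j → A i j = 0) :
    ∃ D : Fin n → ℝ, (∃ i j, D i ≠ D j) ∧
      ∀ t : ℝ, 0 ≤ t → specRad (expDiag (t • D) * A) = specRad A := by
  set r₁ := cplxSpecRad ((A.map Complex.ofReal).toSquareBlockProp p)
  set r₂ := cplxSpecRad ((A.map Complex.ofReal).toSquareBlockProp fun i => ¬p i)
  obtain ⟨c, d, hcd, hmax⟩ := exists_max_exp_mul_eq_max (cplxSpecRad_nonneg _ : 0 ≤ r₁)
    (cplxSpecRad_nonneg _ : 0 ≤ r₂)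
  obtain ⟨⟨i, hi⟩⟩ := ‹Nonempty {i // p i}›
  obtain ⟨⟨j, hj⟩⟩ := ‹Nonempty {i // ¬p i}›
  set D : Fin n → ℝ := fun k => if p k then c else d
  have hray : ∀ t : ℝ, 0 ≤ t → specRad (expDiag (t • D) * A) = max r₁ r₂ := by
    intro t ht
    rw [show t • D = fun k => if p k then t * c else t * d by ext k; simp [D],
      specRad_expDiag_ite_mul_eq_max A p h, hmax t ht]
  have hA : specRad A = max r₁ r₂ := by simpa [expDiag] using hray 0 le_rfl
  exact ⟨D, ⟨i, j, by simpa [D, hi, hj] using hcd⟩, fun t ht => (hray t ht).trans hA.symm⟩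

theorem stmt1 {n : ℕ} (A : Matrix (Fin n) (Fin n) ℝ)
    (hA : ∀ i j, 0 ≤ A i j) (hr : 0 < specRad A) (hred : ¬ MatIrred A) :
    ¬ Property1 A ∧
      ∃ C D : Fin n → ℝ, (¬ ∃ c : ℝ, ∀ i, C i - D i = c) ∧
        ∀ t ∈ Set.Ioo (0:ℝ) 1,
          Real.log (specRad (expDiag (fun i => (1 - t) * C i + t * D i) * A)) =
            (1 - t) * Real.log (specRad (expDiag C * A)) +
              t * Real.log (specRad (expDiag D * A)) := by
  classical
  have hA0 : A ≠ 0 := by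
    rintro rfl
    simp [specRad_eq_cplxSpecRad, cplxSpecRad_zero] at hr
  obtain ⟨p, ⟨i, hi⟩, ⟨j, hj⟩, hblock⟩ :=
    exists_twoBlockTriangular_of_not_matIrred hA hA0 hred
  have : Nonempty {i // p i} := ⟨⟨i, hi⟩⟩
  have : Nonempty {i // ¬p i} := ⟨⟨j, hj⟩⟩
  obtain ⟨D, ⟨k, l, hkl⟩, hconst⟩ := exists_specRad_expDiag_smul_mul_eq A p hblock
  have hCD : ¬∃ c : ℝ, ∀ i, (fun _ => 0 : Fin n → ℝ) i - D i = c :=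
    fun ⟨c, hc⟩ => hkl (by linarith [hc k, hc l])
  have hlog : ∀ t ∈ Set.Ioo (0:ℝ) 1,
      Real.log (specRad
          (expDiag (fun i => (1 - t) * (fun _ => 0 : Fin n → ℝ) i + t * D i) * A)) =
        (1 - t) * Real.log (specRad (expDiag (fun _ => 0) * A)) +
          t * Real.log (specRad (expDiag D * A)) := by
    intro t ht
    have hC : specRad (expDiag (fun _ => 0) * A) = specRad A := by
      have h0 := hconst 0 le_rfl
      rwa [zero_smul] at h0
    have hD : specRad (expDiag D * A) = specRad A := by simpa using hconst 1 zero_le_one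
    simp only [mul_zero, zero_add]
    rw [show (fun i => t * D i) = t • D from rfl, hconst t ht.1.le, hC, hD]
    ring
  have hhalf : (1 / 2 : ℝ) ∈ Set.Ioo 0 1 := ⟨by norm_num, by norm_num⟩
  exact ⟨fun hP => hCD (hP _ D _ hhalf (hlog _ hhalf)), _, D, hCD, hlog⟩
end
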